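/- Let E and F be nonempty convex sets in ℝⁿ. The following are equivalent: (a) every vector u ∈ ℝⁿ is uniquely expressible as u = y + z, where y ∈ E, z ∈ F, and y · z = 0 (uniqueness meaning: if u = y₁ + z₁ = y₂ + z₂ with y₁, y₂ ∈ E, z₁, z₂ ∈ F, y₁ · z₁ = 0 and y₂ · z₂ = 0, then y₁ = y₂ and z₁ = z₂); (b) E and F are polar cones of each other, i.e., E = F° and F = E°. -/

import Mathlib

open RealInnerProductSpace Pointwise

/-- The (negative) polar set of `X`. -/
def polarSet {H : Type*} [NormedAddCommGroup H] [InnerProductSpace ℝ H] (X : Set H) : Set H :=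
  {x | ∀ e ∈ X, ⟪x, e⟫ ≤ 0}

/-- `y` is the metric projection of `u` on `E`: it belongs to `E` and is nearest to `u`. -/
def IsMetricProj {H : Type*} [NormedAddCommGroup H] [InnerProductSpace ℝ H]
    (E : Set H) (u y : H) : Prop :=
  y ∈ E ∧ ∀ x ∈ E, ‖u - y‖ ≤ ‖u - x‖

section Aux

variable {H : Type*} [NormedAddCommGroup H] [InnerProductSpace ℝ H]

/-- The unique orthogonal decomposition property for the pair of sets `(A, B)`. -/
def MoreauGood (A B : Set H) : Prop :=
  (∀ u : H, ∃ a ∈ A, ∃ b ∈ B, ⟪a, b⟫ = 0 ∧ u = a + b) ∧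
  (∀ u a₁ b₁ a₂ b₂ : H, a₁ ∈ A → b₁ ∈ B → a₂ ∈ A → b₂ ∈ B →
    ⟪a₁, b₁⟫ = 0 → ⟪a₂, b₂⟫ = 0 → u = a₁ + b₁ → u = a₂ + b₂ → a₁ = a₂ ∧ b₁ = b₂)

theorem MoreauGood.symm {A B : Set H} (h : MoreauGood A B) : MoreauGood B A := by
  obtain ⟨hex, hun⟩ := h
  constructor
  · intro u
    obtain ⟨a, ha, b, hb, ho, hs⟩ := hex u
    exact ⟨b, hb, a, ha, by rw [real_inner_comm]; exact ho, by rw [hs, add_comm]⟩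
  · intro u a₁ b₁ a₂ b₂ h1 h2 h3 h4 o1 o2 s1 s2
    have := hun u b₁ a₁ b₂ a₂ h2 h1 h4 h3 (by rw [real_inner_comm]; exact o1)
      (by rw [real_inner_comm]; exact o2) (by rw [s1, add_comm]) (by rw [s2, add_comm])
    exact ⟨this.2, this.1⟩

theorem MoreauGood.zero_mem_left {A B : Set H} (h : MoreauGood A B) : (0 : H) ∈ A := by
  obtain ⟨a, ha, b, hb, ho, hs⟩ := h.1 0
  have hb' : b = -a := by
    have := hs.symm
    linear_combination (norm := abel) this
  have ha0 : a = 0 := by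
    rw [hb', inner_neg_right, neg_eq_zero, inner_self_eq_zero] at ho
    exact ho
  rwa [ha0] at ha

theorem MoreauGood.smul_mem_left {A B : Set H} (h : MoreauGood A B)
    (hA : Convex ℝ A) (hB : Convex ℝ B) :
    ∀ t : ℝ, 0 ≤ t → ∀ a ∈ A, t • a ∈ A := by
  have h0A : (0 : H) ∈ A := h.zero_mem_left
  have h0B : (0 : H) ∈ B := h.symm.zero_mem_left
  have smallA : ∀ s : ℝ, 0 ≤ s → s ≤ 1 → ∀ a ∈ A, s • a ∈ A := by
    intro s hs0 hs1 a ha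
    simpa using hA ha h0A hs0 (sub_nonneg.mpr hs1) (by ring)
  have smallB : ∀ s : ℝ, 0 ≤ s → s ≤ 1 → ∀ b ∈ B, s • b ∈ B := by
    intro s hs0 hs1 b hb
    simpa using hB hb h0B hs0 (sub_nonneg.mpr hs1) (by ring)
  have double : ∀ a ∈ A, (2 : ℝ) • a ∈ A := by
    intro a ha
    obtain ⟨p, hp, q, hq, ho, hs⟩ := h.1 ((2 : ℝ) • a)
    have hsum2 : a = (2 : ℝ)⁻¹ • p + (2 : ℝ)⁻¹ • q := by
      have h2 : (2 : ℝ)⁻¹ • ((2 : ℝ) • a) = (2 : ℝ)⁻¹ • (p + q) := by rw [← hs]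
      rw [smul_add, smul_smul] at h2
      norm_num at h2
      rw [h2]; norm_num
    have hpA : (2 : ℝ)⁻¹ • p ∈ A := smallA _ (by norm_num) (by norm_num) p hp
    have hqB : (2 : ℝ)⁻¹ • q ∈ B := smallB _ (by norm_num) (by norm_num) q hq
    have horth' : ⟪(2 : ℝ)⁻¹ • p, (2 : ℝ)⁻¹ • q⟫ = 0 := by
      rw [real_inner_smul_left, real_inner_smul_right, ho]
      ring
    have huni := h.2 a a 0 ((2 : ℝ)⁻¹ • p) ((2 : ℝ)⁻¹ • q) ha h0B hpA hqB
      (by simp) horth' (by simp) hsum2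
    have hq0 : q = 0 := by
      have := huni.2.symm
      have h2 : (2 : ℝ) • ((2 : ℝ)⁻¹ • q) = (2 : ℝ) • (0 : H) := by rw [this]
      rw [smul_smul] at h2
      norm_num at h2
      exact h2
    have : (2 : ℝ) • a = p := by rw [hs, hq0, add_zero]
    rwa [this]
  have pow2 : ∀ k : ℕ, ∀ a ∈ A, ((2 : ℝ) ^ k) • a ∈ A := by
    intro k
    induction k with
    | zero => intro a ha; simpa using ha
    | succ k ih =>
      intro a ha
      have h2 : ((2 : ℝ) ^ (k + 1)) • a = ((2 : ℝ) ^ k) • ((2 : ℝ) • a) := by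
        rw [smul_smul]; ring_nf
      rw [h2]
      exact ih _ (double a ha)
  intro t ht a ha
  obtain ⟨N, hN⟩ := exists_nat_ge t
  have hN2 : (N : ℝ) ≤ 2 ^ N := by exact_mod_cast (Nat.lt_two_pow_self (n := N)).le
  have htN : t ≤ 2 ^ N := hN.trans hN2
  have hpow : (0 : ℝ) < 2 ^ N := by positivity
  have hta : t • a = (t / 2 ^ N) • (((2 : ℝ) ^ N) • a) := by
    rw [smul_smul]
    congr 1
    field_simp
  rw [hta]
  exact smallA _ (div_nonneg ht hpow.le) ((div_le_one hpow).mpr htN) _ (pow2 N a ha)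

theorem MoreauGood.polar_left {A B : Set H} (h : MoreauGood A B) : polarSet A ⊆ B := by
  intro w hw
  obtain ⟨a, ha, b, hb, ho, hs⟩ := h.1 w
  have h1 : ⟪w, a⟫ ≤ 0 := hw a ha
  have hba : ⟪b, a⟫ = (0 : ℝ) := by rw [real_inner_comm]; exact ho
  have h2 : ⟪w, a⟫ = ‖a‖ ^ 2 := by
    rw [hs, inner_add_left, hba, add_zero, real_inner_self_eq_norm_sq]

  have ha0 : a = 0 := by
    have : ‖a‖ ^ 2 ≤ 0 := h2 ▸ h1
    have h3 : ‖a‖ = 0 := by nlinarith [norm_nonneg a]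
    exact norm_eq_zero.mp h3
  have : w = b := by rw [hs, ha0, zero_add]
  rwa [this]

theorem polarSet_zero_mem (X : Set H) : (0 : H) ∈ polarSet X := by
  show ∀ e ∈ X, ⟪(0 : H), e⟫ ≤ 0
  intro e _
  rw [inner_zero_left]

theorem polarSet_smul {X : Set H} {x : H} (hx : x ∈ polarSet X) {t : ℝ} (ht : 0 ≤ t) :
    t • x ∈ polarSet X := by
  show ∀ e ∈ X, ⟪t • x, e⟫ ≤ 0
  intro e he
  rw [real_inner_smul_left]
  exact mul_nonpos_of_nonneg_of_nonpos ht (hx e he)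

theorem polarSet_add {X : Set H} {x y : H} (hx : x ∈ polarSet X) (hy : y ∈ polarSet X) :
    x + y ∈ polarSet X := by
  show ∀ e ∈ X, ⟪x + y, e⟫ ≤ 0
  intro e he
  rw [inner_add_left]
  have h1 := hx e he
  have h2 := hy e he
  linarith

theorem isClosed_polarSet (X : Set H) : IsClosed (polarSet X) := by
  have h1 : polarSet X = ⋂ e ∈ X, {x : H | ⟪x, e⟫ ≤ 0} := by
    ext x
    simp [polarSet, Set.mem_iInter]
  rw [h1]
  refine isClosed_biInter fun e _ => ?_
  exact isClosed_le (Continuous.inner continuous_id continuous_const) continuous_const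

end Aux

section Aux2

variable {H : Type*} [NormedAddCommGroup H] [InnerProductSpace ℝ H] [FiniteDimensional ℝ H]

/-- Existence of a point in the relative interior (with an explicit ball radius). -/
theorem moreau_exists_ri (A : Set H) (h0 : (0 : H) ∈ A) (hconv : Convex ℝ A)
    (hsmul : ∀ t : ℝ, 0 ≤ t → ∀ a ∈ A, t • a ∈ A) :
    ∃ x₀ ∈ A, ∃ ρ : ℝ, 0 < ρ ∧
      ∀ v ∈ Submodule.span ℝ A, ‖v - x₀‖ < ρ → v ∈ A := by
  have hadd : ∀ a ∈ A, ∀ b ∈ A, a + b ∈ A := by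
    intro a ha b hb
    have hmid : (2 : ℝ)⁻¹ • a + (2 : ℝ)⁻¹ • b ∈ A :=
      hconv ha hb (by norm_num) (by norm_num) (by norm_num)
    have h2 := hsmul 2 (by norm_num) _ hmid
    rw [smul_add, smul_smul, smul_smul] at h2
    norm_num at h2
    exact h2
  obtain ⟨s, hsub, hspan, hli⟩ := exists_linearIndependent ℝ A
  haveI : Fintype s := hli.setFinite.fintype
  set v : s → H := fun i => (i : H) with hv
  have hrange : Set.range v = s := Subtype.range_coe
  set T : (s → ℝ) →ₗ[ℝ] H := Fintype.linearCombination ℝ v with hT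
  have hTapp : ∀ c : s → ℝ, T c = ∑ i, c i • v i := fun c => rfl
  have hinj : Function.Injective T := by
    rw [← LinearMap.ker_eq_bot, LinearMap.ker_eq_bot']
    intro c hc
    funext i
    exact (Fintype.linearIndependent_iff.mp hli) c (by rw [← hTapp c]; exact hc) i
  set eqv : (s → ℝ) ≃ₗ[ℝ] LinearMap.range T := LinearEquiv.ofInjective T hinj with heqv
  set g : LinearMap.range T →ₗ[ℝ] (s → ℝ) := eqv.symm.toLinearMap with hg
  set G : LinearMap.range T →L[ℝ] (s → ℝ) := LinearMap.toContinuousLinearMap g with hG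
  set C : ℝ := ‖G‖ + 1 with hC
  have hCpos : 0 < C := by positivity
  have hbound : ∀ y : LinearMap.range T, ‖g y‖ ≤ C * ‖y‖ := by
    intro y
    have h1 : ‖G y‖ ≤ ‖G‖ * ‖y‖ := G.le_opNorm y
    have h2 : G y = g y := by rw [hG]; simp
    rw [h2] at h1
    nlinarith [norm_nonneg y]
  set one : s → ℝ := fun _ => 1 with hone
  set x₀ : H := T one with hx₀
  have hmemA : ∀ (c : s → ℝ), (∀ i, 0 ≤ c i) → T c ∈ A := by
    intro c hc
    rw [hTapp]
    apply Finset.sum_induction _ (· ∈ A) (fun a b ha hb => hadd a ha b hb) h0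
    intro i _
    exact hsmul (c i) (hc i) (v i) (hsub i.2)
  have hx₀A : x₀ ∈ A := hmemA one (fun _ => by norm_num)
  refine ⟨x₀, hx₀A, C⁻¹, by positivity, ?_⟩
  intro w hw hnear
  have hw' : w ∈ Submodule.span ℝ (Set.range v) := by
    rw [hrange, hspan]; exact hw
  obtain ⟨c, hc⟩ := (Submodule.mem_span_range_iff_exists_fun ℝ).mp hw'
  have hTc : T c = w := by rw [hTapp]; exact hc
  set y : LinearMap.range T := ⟨w, ⟨c, hTc⟩⟩ with hy
  set y₀ : LinearMap.range T := ⟨x₀, ⟨one, rfl⟩⟩ with hy₀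
  have hgy : g y = c := by
    rw [hg]
    apply eqv.symm_apply_eq.mpr
    apply Subtype.ext
    have h4 : ((LinearEquiv.ofInjective T hinj) c : H) = T c := LinearEquiv.ofInjective_apply T c
    rw [heqv, h4, hTc]
  have hgy₀ : g y₀ = one := by
    rw [hg]
    apply eqv.symm_apply_eq.mpr
    apply Subtype.ext
    have h4 : ((LinearEquiv.ofInjective T hinj) one : H) = T one := LinearEquiv.ofInjective_apply T one
    rw [heqv, h4]
  have hdiff : ∀ i : s, |c i - 1| ≤ C * ‖w - x₀‖ := by
    intro i
    have h1 : c - one = g (y - y₀) := by rw [map_sub, hgy, hgy₀]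
    have h2 : ‖y - y₀‖ = ‖w - x₀‖ := by
      have : ((y - y₀ : LinearMap.range T) : H) = w - x₀ := by
        simp [hy, hy₀]
      rw [← this, Submodule.coe_norm]
    calc |c i - 1| = ‖(c - one) i‖ := by simp [hone, Real.norm_eq_abs]
      _ ≤ ‖c - one‖ := norm_le_pi_norm _ i
      _ = ‖g (y - y₀)‖ := by rw [h1]
      _ ≤ C * ‖y - y₀‖ := hbound _
      _ = C * ‖w - x₀‖ := by rw [h2]
  have hcpos : ∀ i, 0 ≤ c i := by
    intro i
    have h3 : |c i - 1| < 1 := by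
      calc |c i - 1| ≤ C * ‖w - x₀‖ := hdiff i
        _ < C * C⁻¹ := by
          apply mul_lt_mul_of_pos_left hnear hCpos
        _ = 1 := mul_inv_cancel₀ (ne_of_gt hCpos)
    have := abs_lt.mp h3
    linarith [this.1]
  rw [← hTc]
  exact hmemA c hcpos

/-- Key lemma: if some relative interior point of `A` is orthogonal to `z ∈ B`, then
`z` is in the polar of `A`. -/
theorem moreau_lemR {A B : Set H} (h : MoreauGood A B) (hAconv : Convex ℝ A)
    (hBconv : Convex ℝ B)
    {x₀ : H} (hx₀ : x₀ ∈ A) {ρ : ℝ} (hρ : 0 < ρ)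
    (hball : ∀ v ∈ Submodule.span ℝ A, ‖v - x₀‖ < ρ → v ∈ A)
    {z : H} (hz : z ∈ B) (horth : ⟪x₀, z⟫ = 0) :
    z ∈ polarSet A := by
  have h0A : (0 : H) ∈ A := h.zero_mem_left
  have hsmul := h.smul_mem_left hAconv hBconv
  set R : ℝ := (‖z‖ + 1) / ρ with hR
  have hRpos : 0 < R := by positivity
  have hzR : ‖z‖ < R * ρ := by
    rw [hR, div_mul_cancel₀]
    · linarith
    · exact ne_of_gt hρ
  set u : H := R • x₀ + z with hu
  have hclconv : Convex ℝ (closure A) := hAconv.closure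
  have hclne : (closure A).Nonempty := ⟨0, subset_closure h0A⟩
  have hcl_smul : ∀ t : ℝ, 0 ≤ t → ∀ w ∈ closure A, t • w ∈ closure A := by
    intro t ht w hw
    exact map_mem_closure (continuous_const_smul t) hw (fun a ha => hsmul t ht a ha)
  have hcl_add : ∀ w ∈ closure A, ∀ w' ∈ closure A, w + w' ∈ closure A := by
    intro w hw w' hw'
    have hmid : (2 : ℝ)⁻¹ • w + (2 : ℝ)⁻¹ • w' ∈ closure A :=
      hclconv hw hw' (by norm_num) (by norm_num) (by norm_num)
    have h2 := hcl_smul 2 (by norm_num) _ hmid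
    rw [smul_add, smul_smul, smul_smul] at h2
    norm_num at h2
    exact h2
  obtain ⟨m, hmK, hmin⟩ := exists_norm_eq_iInf_of_complete_convex hclne
    isClosed_closure.isComplete hclconv u
  have hvar : ∀ w ∈ closure A, ⟪u - m, w - m⟫ ≤ 0 :=
    (norm_eq_iInf_iff_real_inner_le_zero hclconv hmK).1 hmin
  have hvar' : ∀ a ∈ closure A, ⟪u - m, a⟫ ≤ 0 := by
    intro a ha
    have h3 := hvar (m + a) (hcl_add m hmK a ha)
    simpa using h3
  have hm_orth : ⟪u - m, m⟫ = 0 := by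
    have h1 := hvar ((2 : ℝ) • m) (hcl_smul 2 (by norm_num) m hmK)
    have h2 := hvar 0 (subset_closure h0A)
    have e1 : (2 : ℝ) • m - m = m := by rw [two_smul]; abel
    rw [e1] at h1
    rw [zero_sub, inner_neg_right] at h2
    linarith
  have hRx₀A : R • x₀ ∈ A := hsmul R hRpos.le x₀ hx₀
  have hbnd : ‖R • x₀ - m‖ ≤ ‖z‖ := by
    have hv := hvar (R • x₀) (subset_closure hRx₀A)
    have hexp : ‖u - R • x₀‖ ^ 2 =
        ‖u - m‖ ^ 2 - 2 * ⟪u - m, R • x₀ - m⟫ + ‖R • x₀ - m‖ ^ 2 := by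
      have e2 : u - R • x₀ = (u - m) - (R • x₀ - m) := by abel
      rw [e2, norm_sub_sq_real]
    have huz : ‖u - R • x₀‖ = ‖z‖ := by
      rw [show u - R • x₀ = z by rw [hu]; abel]
    rw [huz] at hexp
    nlinarith [norm_nonneg (u - m), norm_nonneg (R • x₀ - m), norm_nonneg z]
  have hm_span : m ∈ Submodule.span ℝ A := by
    have hclosed : IsClosed ((Submodule.span ℝ A : Submodule ℝ H) : Set H) :=
      Submodule.closed_of_finiteDimensional _
    exact closure_minimal Submodule.subset_span hclosed hmK
  have hmA : m ∈ A := by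
    have hsc : R⁻¹ • m ∈ Submodule.span ℝ A := Submodule.smul_mem _ _ hm_span
    have hnorm : ‖R⁻¹ • m - x₀‖ < ρ := by
      have e1 : R⁻¹ • m - x₀ = R⁻¹ • (m - R • x₀) := by
        rw [smul_sub, smul_smul, inv_mul_cancel₀ (ne_of_gt hRpos), one_smul]
      rw [e1, norm_smul, Real.norm_eq_abs, abs_of_pos (inv_pos.mpr hRpos)]
      have h5 : ‖m - R • x₀‖ ≤ ‖z‖ := by rw [norm_sub_rev]; exact hbnd
      have h6 : R⁻¹ * ‖m - R • x₀‖ ≤ R⁻¹ * ‖z‖ :=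
        mul_le_mul_of_nonneg_left h5 (inv_pos.mpr hRpos).le
      have h7 : R⁻¹ * ‖z‖ < R⁻¹ * (R * ρ) :=
        mul_lt_mul_of_pos_left hzR (inv_pos.mpr hRpos)
      have h8 : R⁻¹ * (R * ρ) = ρ := by
        field_simp
      linarith
    have h9 := hball _ hsc hnorm
    have e2 : R • (R⁻¹ • m) = m := by
      rw [smul_smul, mul_inv_cancel₀ (ne_of_gt hRpos), one_smul]
    have h10 := hsmul R hRpos.le _ h9
    rwa [e2] at h10
  set q : H := u - m with hq
  have hq_polar : ∀ a ∈ A, ⟪q, a⟫ ≤ 0 := fun a ha => hvar' a (subset_closure ha)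
  have hq_mem : q ∈ polarSet A := hq_polar
  have hqB : q ∈ B := h.polar_left hq_mem
  have horth1 : ⟪R • x₀, z⟫ = 0 := by rw [real_inner_smul_left, horth, mul_zero]
  have horth2 : ⟪m, q⟫ = 0 := by rw [real_inner_comm]; exact hm_orth
  have hsum2 : u = m + q := by rw [hq]; abel
  obtain ⟨h1, h2⟩ := h.2 u (R • x₀) z m q hRx₀A hz hmA hqB horth1 horth2 hu hsum2
  show ∀ e ∈ A, ⟪z, e⟫ ≤ 0
  intro a ha
  rw [h2]
  exact hq_polar a ha

omit [FiniteDimensional ℝ H] in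
/-- Segment towards a relative interior point stays in the relative interior. -/
theorem moreau_ri_segment {A : Set H} (hconv : Convex ℝ A)
    {x₀ : H} (hx₀ : x₀ ∈ A) {ρ : ℝ} (hρ : 0 < ρ)
    (hball : ∀ v ∈ Submodule.span ℝ A, ‖v - x₀‖ < ρ → v ∈ A)
    {e : H} (he : e ∈ A) {t : ℝ} (ht0 : 0 < t) (ht1 : t ≤ 1) :
    (1 - t) • e + t • x₀ ∈ A ∧ 0 < t * ρ ∧
      ∀ v ∈ Submodule.span ℝ A, ‖v - ((1 - t) • e + t • x₀)‖ < t * ρ → v ∈ A := by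
  have hmem : (1 - t) • e + t • x₀ ∈ A := hconv he hx₀ (by linarith) ht0.le (by ring)
  refine ⟨hmem, by positivity, ?_⟩
  intro v hv hnear
  set c : H := (1 - t) • e + t • x₀ with hc
  set δ : H := v - c with hδ
  have hδspan : δ ∈ Submodule.span ℝ A := by
    apply Submodule.sub_mem _ hv
    apply Submodule.add_mem
    · exact Submodule.smul_mem _ _ (Submodule.subset_span he)
    · exact Submodule.smul_mem _ _ (Submodule.subset_span hx₀)
  set w : H := x₀ + t⁻¹ • δ with hw
  have hwspan : w ∈ Submodule.span ℝ A :=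
    Submodule.add_mem _ (Submodule.subset_span hx₀) (Submodule.smul_mem _ _ hδspan)
  have hwnear : ‖w - x₀‖ < ρ := by
    rw [hw, add_sub_cancel_left, norm_smul, Real.norm_eq_abs,
      abs_of_pos (inv_pos.mpr ht0)]
    have h1 : t⁻¹ * ‖δ‖ < t⁻¹ * (t * ρ) := mul_lt_mul_of_pos_left hnear (inv_pos.mpr ht0)
    have h2 : t⁻¹ * (t * ρ) = ρ := by field_simp
    linarith
  have hwA : w ∈ A := hball w hwspan hwnear
  have hveq : (1 - t) • e + t • w = v := by
    rw [hw, smul_add, smul_smul, mul_inv_cancel₀ (ne_of_gt ht0), one_smul, ← add_assoc,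
      ← hc, hδ]
    abel
  rw [← hveq]
  exact hconv he hwA (by linarith) ht0.le (by ring)

omit [FiniteDimensional ℝ H] in
/-- Mixing two points with opposite pairing signs to get a relative interior point orthogonal
to a given vector. -/
theorem moreau_mix {A : Set H} (hconv : Convex ℝ A)
    {x₀ : H} (hx₀ : x₀ ∈ A) {ρ : ℝ} (hρ : 0 < ρ)
    (hball : ∀ v ∈ Submodule.span ℝ A, ‖v - x₀‖ < ρ → v ∈ A)
    (ζ : H) {w : H} (hw : w ∈ A) (hsign : ⟪x₀, ζ⟫ * ⟪w, ζ⟫ < 0) :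
    ∃ y ∈ A, ∃ ρ' : ℝ, 0 < ρ' ∧
      (∀ v ∈ Submodule.span ℝ A, ‖v - y‖ < ρ' → v ∈ A) ∧ ⟪y, ζ⟫ = 0 := by
  set a : ℝ := ⟪x₀, ζ⟫ with ha
  set b : ℝ := ⟪w, ζ⟫ with hb
  have hba : b - a ≠ 0 := by
    intro h0
    have : b = a := by linarith
    rw [this] at hsign
    nlinarith
  set t : ℝ := b / (b - a) with ht
  have htt : 0 < t ∧ t < 1 := by
    rcases mul_neg_iff.mp hsign with ⟨ha1, hb1⟩ | ⟨ha1, hb1⟩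
    · constructor
      · apply div_pos_of_neg_of_neg hb1 (by linarith)
      · exact div_lt_one_iff.mpr (Or.inr (Or.inr ⟨by linarith, by linarith⟩))
    · constructor
      · apply div_pos hb1 (by linarith)
      · rw [div_lt_one (by linarith)]
        linarith
  obtain ⟨hymem, hρ'pos, hball'⟩ := moreau_ri_segment hconv hx₀ hρ hball hw htt.1 htt.2.le
  refine ⟨(1 - t) • w + t • x₀, hymem, t * ρ, hρ'pos, hball', ?_⟩
  rw [inner_add_left, real_inner_smul_left, real_inner_smul_left, ← ha, ← hb]
  have htb : t * (b - a) = b := by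
    rw [ht, div_mul_cancel₀ _ hba]
  linear_combination -htb

/-- The central inequality. -/
theorem moreau_key {E F : Set H} (h : MoreauGood E F) (hEconv : Convex ℝ E)
    (hFconv : Convex ℝ F) : ∀ x ∈ E, ∀ z ∈ F, ⟪x, z⟫ ≤ 0 := by
  intro x hx z hz
  by_contra hpos
  push_neg at hpos
  have h0E : (0 : H) ∈ E := h.zero_mem_left
  have h0F : (0 : H) ∈ F := h.symm.zero_mem_left
  have hsmulE := h.smul_mem_left hEconv hFconv
  have hsmulF := h.symm.smul_mem_left hFconv hEconv
  have hpolarEF : polarSet E ⊆ F := h.polar_left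
  have finishE : ∀ y : H, y ∈ E → ∀ ρ' : ℝ, 0 < ρ' →
      (∀ v ∈ Submodule.span ℝ E, ‖v - y‖ < ρ' → v ∈ E) → ⟪y, z⟫ = 0 → False := by
    intro y hy ρ' hρ' hball hyz
    have hzp : z ∈ polarSet E := moreau_lemR h hEconv hFconv hy hρ' hball hz hyz
    have h1 := hzp x hx
    rw [real_inner_comm] at h1
    linarith
  have finishF : ∀ y : H, y ∈ F → ∀ ρ' : ℝ, 0 < ρ' →
      (∀ v ∈ Submodule.span ℝ F, ‖v - y‖ < ρ' → v ∈ F) → ⟪y, x⟫ = 0 → False := by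
    intro y hy ρ' hρ' hball hyx
    have hxp : x ∈ polarSet F := moreau_lemR h.symm hFconv hEconv hy hρ' hball hx hyx
    have h1 := hxp z hz
    linarith
  obtain ⟨x₀, hx₀E, ρ, hρ, hballE⟩ := moreau_exists_ri E h0E hEconv hsmulE
  rcases lt_trichotomy (⟪x₀, z⟫ : ℝ) 0 with hneg | hzero | hposE
  · obtain ⟨y, hyE, ρ', hρ', hball', hy0⟩ := moreau_mix hEconv hx₀E hρ hballE z hx
      (by nlinarith)
    exact finishE y hyE ρ' hρ' hball' hy0
  · exact finishE x₀ hx₀E ρ hρ hballE hzero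
  · have hgeq : ∀ e ∈ E, (0 : ℝ) ≤ ⟪e, z⟫ := by
      intro e he
      by_contra hlt
      push_neg at hlt
      obtain ⟨y, hyE, ρ', hρ', hball', hy0⟩ := moreau_mix hEconv hx₀E hρ hballE z he
        (by nlinarith)
      exact finishE y hyE ρ' hρ' hball' hy0
    have hnegz : -z ∈ F := by
      apply hpolarEF
      show ∀ e ∈ E, ⟪-z, e⟫ ≤ 0
      intro e he
      rw [inner_neg_left]
      have h1 := hgeq e he
      rw [real_inner_comm] at h1
      linarith
    obtain ⟨y₀, hy₀F, τ, hτ, hballF⟩ := moreau_exists_ri F h0F hFconv hsmulF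
    rcases lt_trichotomy (⟪y₀, x⟫ : ℝ) 0 with hneg' | hzero' | hpos'
    · obtain ⟨y, hyF, ρ', hρ', hball', hy0⟩ := moreau_mix hFconv hy₀F hτ hballF x hz
        (by
          have h1 : (⟪z, x⟫ : ℝ) = ⟪x, z⟫ := real_inner_comm x z
          nlinarith)
      exact finishF y hyF ρ' hρ' hball' hy0
    · exact finishF y₀ hy₀F τ hτ hballF hzero'
    · obtain ⟨y, hyF, ρ', hρ', hball', hy0⟩ := moreau_mix hFconv hy₀F hτ hballF x hnegz
        (by
          have h1 : (⟪-z, x⟫ : ℝ) = -⟪x, z⟫ := by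
            rw [inner_neg_left, real_inner_comm]
          nlinarith)
      exact finishF y hyF ρ' hρ' hball' hy0

end Aux2

theorem unique_orthogonal_decomposition_characterizes_polar_cones
    (n : ℕ) (E F : Set (EuclideanSpace ℝ (Fin n)))
    (hEne : E.Nonempty) (hEconv : Convex ℝ E)
    (hFne : F.Nonempty) (hFconv : Convex ℝ F) :
    ((∀ u : EuclideanSpace ℝ (Fin n),
        ∃ y ∈ E, ∃ z ∈ F, ⟪y, z⟫ = 0 ∧ u = y + z) ∧
      (∀ u y₁ z₁ y₂ z₂ : EuclideanSpace ℝ (Fin n),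
        y₁ ∈ E → z₁ ∈ F → y₂ ∈ E → z₂ ∈ F →
        ⟪y₁, z₁⟫ = 0 → ⟪y₂, z₂⟫ = 0 →
        u = y₁ + z₁ → u = y₂ + z₂ → y₁ = y₂ ∧ z₁ = z₂)) ↔
      (E = polarSet F ∧ F = polarSet E) := by
  constructor
  · intro hG'
    have hG : MoreauGood E F := hG'
    have hkey := moreau_key hG hEconv hFconv
    constructor
    · apply Set.Subset.antisymm
      · intro x hx e he
        exact hkey x hx e he
      · exact hG.symm.polar_left
    · apply Set.Subset.antisymm
      · intro z hz e he
        rw [real_inner_comm]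
        exact hkey e he z hz
      · exact hG.polar_left
  · rintro ⟨hEp, hFp⟩
    have hEclosed : IsClosed E := by rw [hEp]; exact isClosed_polarSet F
    constructor
    · intro u
      obtain ⟨y, hyE, hmin⟩ := exists_norm_eq_iInf_of_complete_convex hEne
        hEclosed.isComplete hEconv u
      have hvar : ∀ w ∈ E, ⟪u - y, w - y⟫ ≤ 0 :=
        (norm_eq_iInf_iff_real_inner_le_zero hEconv hyE).1 hmin
      have h0E : (0 : EuclideanSpace ℝ (Fin n)) ∈ E := by
        rw [hEp]; exact polarSet_zero_mem F
      have hyE' : y ∈ polarSet F := by rw [← hEp]; exact hyE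
      have h2yE : (2 : ℝ) • y ∈ E := by
        rw [hEp]; exact polarSet_smul hyE' (by norm_num)
      have h1 := hvar ((2 : ℝ) • y) h2yE
      have h2 := hvar 0 h0E
      have e1 : (2 : ℝ) • y - y = y := by rw [two_smul]; abel
      rw [e1] at h1
      rw [zero_sub, inner_neg_right] at h2
      have horth : ⟪u - y, y⟫ = 0 := le_antisymm h1 (by linarith)
      have hzF : u - y ∈ F := by
        rw [hFp]
        show ∀ e ∈ E, ⟪u - y, e⟫ ≤ 0
        intro e he
        have he' : e ∈ polarSet F := by rw [← hEp]; exact he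
        have hsumE : y + e ∈ E := by rw [hEp]; exact polarSet_add hyE' he'
        have h3 := hvar (y + e) hsumE
        simpa using h3
      refine ⟨y, hyE, u - y, hzF, ?_, by abel⟩
      rw [real_inner_comm]
      exact horth
    · intro u y₁ z₁ y₂ z₂ hy₁ hz₁ hy₂ hz₂ ho₁ ho₂ hs₁ hs₂
      have hsum : y₁ + z₁ = y₂ + z₂ := by rw [← hs₁, ← hs₂]
      have hdiff : y₁ - y₂ = z₂ - z₁ := by
        linear_combination (norm := abel) hsum
      have hy₁' : y₁ ∈ polarSet F := by rw [← hEp]; exact hy₁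
      have hy₂' : y₂ ∈ polarSet F := by rw [← hEp]; exact hy₂
      have hb₁ : ⟪y₁, z₂⟫ ≤ 0 := hy₁' z₂ hz₂
      have hb₂ : ⟪y₂, z₁⟫ ≤ 0 := hy₂' z₁ hz₁
      have e2 : ⟪y₁ - y₂, y₁ - y₂⟫ = ⟪y₁ - y₂, z₂ - z₁⟫ :=
        congrArg (fun w => (⟪y₁ - y₂, w⟫ : ℝ)) hdiff
      have e3 : (⟪y₁ - y₂, z₂ - z₁⟫ : ℝ) = ⟪y₁, z₂⟫ + ⟪y₂, z₁⟫ := by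
        rw [inner_sub_left, inner_sub_right, inner_sub_right, ho₁, ho₂]
        ring
      have e4 : ‖y₁ - y₂‖ ^ 2 ≤ 0 := by
        rw [← real_inner_self_eq_norm_sq, e2, e3]
        linarith
      have hy : y₁ = y₂ := by
        have h5 : ‖y₁ - y₂‖ = 0 := by nlinarith [norm_nonneg (y₁ - y₂)]
        exact sub_eq_zero.mp (norm_eq_zero.mp h5)
      have hz : z₁ = z₂ := by
        rw [hy] at hsum
        exact add_left_cancel hsum
      exact ⟨hy, hz⟩
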